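/- Let p ≥ 5 be a prime such that 2^p − 1 is prime. Then the only way to write 2^p − 1 as a difference h − k of harmonic numbers h and k is h = 2^p and k = 1. -/

import Mathlib

/-!
Since `2^p - 1` is a prime other than 2 and 3, any `h`, `k` with `h - k = 2^p - 1` are coprime, so
either `k = 1`, or one of `h`, `k` is a power of 2 and the other a power of 3. Both mixed cases
are ruled out by congruences. For `3^b - 2^c = 2^p - 1`, reducing mod 3 makes `c` odd; `c ≥ 3`
is impossible mod 8, and `c = 1` would give `9 ∣ 2^p + 1`, forcing `3 ∣ p`. For
`2^a - 3^d = 2^p - 1`, reducing mod 3 and mod 8 makes `a` and `d` even, so `2^p - 1` is a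
difference of squares and hence `2^(a/2) = 3^(d/2) + 1`, which is again impossible mod 8.
-/

/-- A harmonic number is a positive integer of the form 2^a * 3^b. -/
def IsHarmonic (n : ℕ) : Prop := ∃ a b : ℕ, n = 2 ^ a * 3 ^ b

theorem Nat.pow_modEq_pow_mod {x k m : ℕ} (h : x ^ k ≡ 1 [MOD m]) (n : ℕ) :
    x ^ n ≡ x ^ (n % k) [MOD m] := by
  rw [← ZMod.natCast_eq_natCast_iff] at h ⊢
  push_cast at h ⊢
  exact pow_eq_pow_mod n h

theorem Nat.two_pow_mod_three (n : ℕ) : 2 ^ n % 3 = if Even n then 1 else 2 := by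
  rw [Nat.pow_modEq_pow_mod (k := 2) (by decide)]
  rcases Nat.even_or_odd n with h | h
  · simp [h, Nat.even_iff.1 h]
  · simp [Nat.not_even_iff_odd.2 h, Nat.odd_iff.1 h]

theorem Nat.three_pow_mod_eight (n : ℕ) : 3 ^ n % 8 = if Even n then 1 else 3 := by
  rw [Nat.pow_modEq_pow_mod (k := 2) (by decide)]
  rcases Nat.even_or_odd n with h | h
  · simp [h, Nat.even_iff.1 h]
  · simp [Nat.not_even_iff_odd.2 h, Nat.odd_iff.1 h]

theorem Nat.three_dvd_of_nine_dvd_two_pow_add_one {n : ℕ} (h : 9 ∣ 2 ^ n + 1) : 3 ∣ n := by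
  have hper : 2 ^ n % 9 = 2 ^ (n % 6) % 9 := Nat.pow_modEq_pow_mod (by decide) n
  have : n % 6 < 6 := Nat.mod_lt _ (by norm_num)
  interval_cases hr : n % 6 <;> norm_num at hper <;> omega

theorem Nat.sub_eq_one_of_prime_sq_sub_sq {x y : ℕ} (h : (x ^ 2 - y ^ 2).Prime) : x - y = 1 := by
  rw [Nat.sq_sub_sq, Nat.prime_mul_iff] at h
  rcases h with ⟨-, h⟩ | ⟨h, hxy⟩
  · exact h
  · have : x - y ≤ 1 := by omega
    interval_cases x - y
    · exact absurd h Nat.not_prime_zero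
    · rfl

theorem Nat.two_pow_ne_three_pow_add_one {m : ℕ} (hm : 3 ≤ m) (n : ℕ) : 2 ^ m ≠ 3 ^ n + 1 := by
  intro h
  have h8 : 2 ^ 3 ∣ 2 ^ m := pow_dvd_pow 2 hm
  have := Nat.three_pow_mod_eight n
  split_ifs at this <;> omega

namespace IsHarmonic

theorem coprime_of_coprime_two_three {n k : ℕ} (hk : IsHarmonic k) (h2 : n.Coprime 2)
    (h3 : n.Coprime 3) : n.Coprime k := by
  obtain ⟨c, d, rfl⟩ := hk
  exact (h2.pow_right c).mul_right (h3.pow_right d)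

theorem cases_of_coprime {h k : ℕ} (hh : IsHarmonic h) (hk : IsHarmonic k) (hhk : h.Coprime k) :
    h = 1 ∨ k = 1 ∨ (∃ a d, h = 2 ^ a ∧ k = 3 ^ d) ∨ (∃ b c, h = 3 ^ b ∧ k = 2 ^ c) := by
  obtain ⟨a, b, rfl⟩ := hh
  obtain ⟨c, d, rfl⟩ := hk
  have h2 : a = 0 ∨ c = 0 := by
    by_contra! h
    exact Nat.Prime.not_coprime_iff_dvd.2 ⟨2, Nat.prime_two,
      dvd_mul_of_dvd_left (dvd_pow_self 2 h.1) _, dvd_mul_of_dvd_left (dvd_pow_self 2 h.2) _⟩ hhk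
  have h3 : b = 0 ∨ d = 0 := by
    by_contra! h
    exact Nat.Prime.not_coprime_iff_dvd.2 ⟨3, Nat.prime_three,
      dvd_mul_of_dvd_right (dvd_pow_self 3 h.1) _, dvd_mul_of_dvd_right (dvd_pow_self 3 h.2) _⟩ hhk
  rcases h2 with rfl | rfl <;> rcases h3 with rfl | rfl <;> simp

end IsHarmonic

theorem Nat.three_pow_ne_two_pow_sub_one_add_two_pow {p b c : ℕ} (hp_odd : Odd p) (hp3 : ¬ 3 ∣ p)
    (hp1 : p ≠ 1) (hc : c ≠ 0) : 3 ^ b ≠ 2 ^ p - 1 + 2 ^ c := by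
  intro h
  have hp5 : 5 ≤ p := by obtain ⟨r, rfl⟩ := hp_odd; omega
  have h32 : 2 ^ 5 ≤ 2 ^ p := Nat.pow_le_pow_right (by norm_num) hp5
  have hb : 2 ≤ b := by
    by_contra! hb
    have : 0 < 2 ^ c := by positivity
    interval_cases b <;> omega
  have h9 : 3 ^ 2 ∣ 3 ^ b := pow_dvd_pow 3 hb
  have hc_odd : ¬ Even c := by
    have h2p := Nat.two_pow_mod_three p
    have h2c := Nat.two_pow_mod_three c
    simp only [Nat.not_even_iff_odd.2 hp_odd, if_false] at h2p
    split_ifs at h2c <;> omega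
  obtain rfl | hc3 : c = 1 ∨ 3 ≤ c := by
    obtain ⟨r, rfl⟩ := Nat.not_even_iff_odd.1 hc_odd; omega
  · exact hp3 (Nat.three_dvd_of_nine_dvd_two_pow_add_one (by omega))
  · have h8 : 2 ^ 3 ∣ 2 ^ c := pow_dvd_pow 2 hc3
    have h8p : 2 ^ 3 ∣ 2 ^ p := pow_dvd_pow 2 (by omega)
    have := Nat.three_pow_mod_eight b
    split_ifs at this <;> omega

theorem Nat.two_pow_ne_two_pow_sub_one_add_three_pow {p a d : ℕ} (hp_odd : Odd p) (hp5 : 5 ≤ p)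
    (hq : (2 ^ p - 1).Prime) (hd : d ≠ 0) : 2 ^ a ≠ 2 ^ p - 1 + 3 ^ d := by
  intro h
  have h32 : 2 ^ 5 ≤ 2 ^ p := Nat.pow_le_pow_right (by norm_num) hp5
  have h3d : 3 ∣ 3 ^ d := dvd_pow_self 3 hd
  have ha : 6 ≤ a := by
    by_contra! ha
    have : 2 ^ a ≤ 2 ^ 5 := Nat.pow_le_pow_right (by norm_num) (by omega)
    have : 3 ≤ 3 ^ d := Nat.le_self_pow hd 3
    omega
  have h8a : 2 ^ 3 ∣ 2 ^ a := pow_dvd_pow 2 (by omega)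
  have h8p : 2 ^ 3 ∣ 2 ^ p := pow_dvd_pow 2 (by omega)
  have ha_even : Even a := by
    have h2p := Nat.two_pow_mod_three p
    have h2a := Nat.two_pow_mod_three a
    simp only [Nat.not_even_iff_odd.2 hp_odd, if_false] at h2p
    split_ifs at h2a <;> omega
  have hd_even : Even d := by
    have := Nat.three_pow_mod_eight d
    split_ifs at this <;> omega
  obtain ⟨m, rfl⟩ := ha_even
  obtain ⟨n, rfl⟩ := hd_even
  have hsq : (2 ^ m) ^ 2 - (3 ^ n) ^ 2 = 2 ^ p - 1 := by
    rw [← pow_mul, ← pow_mul, mul_two, mul_two]; omega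
  have h1 := Nat.sub_eq_one_of_prime_sq_sub_sq (hsq ▸ hq)
  exact Nat.two_pow_ne_three_pow_add_one (m := m) (by omega) n (by omega)

/-- For a Mersenne prime 2^p - 1 with p ≥ 5 prime, the only way to write it as a
difference of harmonic numbers is 2^p - 1. -/
theorem mersenne_as_difference (p : ℕ) (hp : p.Prime) (hp5 : 5 ≤ p)
    (hmp : Nat.Prime (2 ^ p - 1)) (h k : ℕ) (hh : IsHarmonic h) (hk : IsHarmonic k)
    (hdiff : (2 ^ p - 1) + k = h) :
    h = 2 ^ p ∧ k = 1 := by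
  have h32 : 2 ^ 5 ≤ 2 ^ p := Nat.pow_le_pow_right (by norm_num) hp5
  have hp_odd : Odd p := hp.odd_of_ne_two (by omega)
  have hp3 : ¬ 3 ∣ p := fun h3 => by
    rcases hp.eq_one_or_self_of_dvd 3 h3 with h | h <;> omega
  have hhk : h.Coprime k := by
    rw [← hdiff, Nat.coprime_add_self_left]
    exact hk.coprime_of_coprime_two_three ((Nat.coprime_primes hmp Nat.prime_two).2 (by omega))
      ((Nat.coprime_primes hmp Nat.prime_three).2 (by omega))
  by_cases hk1 : k = 1
  · exact ⟨by omega, hk1⟩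
  exfalso
  rcases hh.cases_of_coprime hk hhk with rfl | rfl | ⟨a, d, rfl, rfl⟩ | ⟨b, c, rfl, rfl⟩
  · omega
  · exact hk1 rfl
  · exact Nat.two_pow_ne_two_pow_sub_one_add_three_pow hp_odd hp5 hmp (by rintro rfl; simp at hk1)
      hdiff.symm
  · exact Nat.three_pow_ne_two_pow_sub_one_add_two_pow hp_odd hp3 (by omega)
      (by rintro rfl; simp at hk1) hdiff.symm
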